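/- arXiv:1809.04031 — 3 statements merged into one kernel-verified Lean document; each statement's English description precedes it below -/
import Mathlib

section
/- Penalty method convergence: Let K be symmetric positive definite, G a matrix with full row rank, and define u_ε as the unique minimizer of C_ε(u) = (1/2)uᵀKu - Pᵀu + (ε/2)‖Gu‖². Then as ε → ∞, u_ε converges to the unique minimizer u* of C(u) = (1/2)uᵀKu - Pᵀu subject to Gu = 0. -/
/-!
A constrained minimizer `u*` satisfies the first-order condition `K u* - P ⊥ ker G`, and since
`(ker G)ᗮ = range Gᵀ` this yields a Lagrange multiplier `λ` with `K u* - P = Gᵀ λ`. The error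
`w = u_ε - u*` then solves `(K + ε GᵀG) w = -Gᵀ λ`; pairing with `w` and completing the square
in `G w` gives `wᵀ K w ≤ |λ|² / (4ε)`, and coercivity of `K` turns this into
`‖w‖ = O(ε^(-1/2))`.
-/

open Matrix Filter

theorem Matrix.exists_transpose_mulVec_eq_of_orthogonal_ker {ι κ : Type*} [Fintype ι] [Fintype κ]
    (G : Matrix κ ι ℝ) {r : ι → ℝ} (hr : ∀ v, G *ᵥ v = 0 → v ⬝ᵥ r = 0) :
    ∃ lam : κ → ℝ, Gᵀ *ᵥ lam = r := by
  classical
  have hrange := LinearMap.orthogonal_ker (toEuclideanLin G)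
  rw [← toEuclideanLin_conjTranspose_eq_adjoint, conjTranspose_eq_transpose_of_trivial] at hrange
  have hmem : WithLp.toLp 2 r ∈ (LinearMap.ker (toEuclideanLin G))ᗮ := by
    rw [Submodule.mem_orthogonal]
    intro v hv
    simpa [EuclideanSpace.inner_eq_star_dotProduct, dotProduct_comm] using
      hr v.ofLp (by simpa using congrArg WithLp.ofLp hv)
  rw [hrange] at hmem
  obtain ⟨lam, hlam⟩ := hmem
  exact ⟨lam.ofLp, by simpa using congrArg WithLp.ofLp hlam⟩

theorem Matrix.PosDef.exists_pos_mul_sq_norm_le {ι : Type*} [Fintype ι] {K : Matrix ι ι ℝ}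
    (hK : K.PosDef) : ∃ α > 0, ∀ x : ι → ℝ, α * ‖x‖ ^ 2 ≤ x ⬝ᵥ K *ᵥ x := by
  rcases subsingleton_or_nontrivial (ι → ℝ) with _ | _
  · exact ⟨1, one_pos, fun x => by simp [Subsingleton.elim x 0]⟩
  have hcont : Continuous fun x : ι → ℝ => x ⬝ᵥ K *ᵥ x :=
    continuous_id.dotProduct (continuous_const.matrix_mulVec continuous_id)
  obtain ⟨x₀, hx₀, hmin⟩ := (isCompact_sphere (0 : ι → ℝ) 1).exists_isMinOn
    (NormedSpace.sphere_nonempty.mpr zero_le_one) hcont.continuousOn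
  refine ⟨x₀ ⬝ᵥ K *ᵥ x₀, hK.dotProduct_mulVec_pos ?_, fun x => ?_⟩
  · rintro rfl; simp at hx₀
  rcases eq_or_ne x 0 with rfl | hx
  · simp
  have hnorm : 0 < ‖x‖ := norm_pos_iff.mpr hx
  have hunit : ‖x‖⁻¹ • x ∈ Metric.sphere (0 : ι → ℝ) 1 := by
    simp [norm_smul, hnorm.ne']
  have hle : x₀ ⬝ᵥ K *ᵥ x₀ ≤ (‖x‖⁻¹ • x) ⬝ᵥ K *ᵥ (‖x‖⁻¹ • x) := hmin hunit
  rw [mulVec_smul, dotProduct_smul, smul_dotProduct, smul_eq_mul, smul_eq_mul] at hle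
  calc x₀ ⬝ᵥ K *ᵥ x₀ * ‖x‖ ^ 2 ≤ ‖x‖⁻¹ * (‖x‖⁻¹ * (x ⬝ᵥ K *ᵥ x)) * ‖x‖ ^ 2 := by gcongr
    _ = x ⬝ᵥ K *ᵥ x := by field_simp

theorem Matrix.IsSymm.dotProduct_mulVec_comm {ι : Type*} [Fintype ι] {K : Matrix ι ι ℝ}
    (hK : K.IsSymm) (u v : ι → ℝ) : u ⬝ᵥ K *ᵥ v = v ⬝ᵥ K *ᵥ u := by
  rw [dotProduct_mulVec, ← mulVec_transpose, hK.eq, dotProduct_comm]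

theorem Matrix.IsSymm.dotProduct_mulVec_sub_eq_zero_of_isMinOn {ι : Type*} [Fintype ι]
    {K : Matrix ι ι ℝ} (hK : K.IsSymm) {P u v : ι → ℝ} {V : Submodule ℝ (ι → ℝ)} (hu : u ∈ V)
    (hmin : IsMinOn (fun x => (1 / 2) * (x ⬝ᵥ K *ᵥ x) - P ⬝ᵥ x) V u) (hv : v ∈ V) :
    v ⬝ᵥ (K *ᵥ u - P) = 0 := by
  have hexpand : ∀ t : ℝ,
      (1 / 2) * ((u + t • v) ⬝ᵥ K *ᵥ (u + t • v)) - P ⬝ᵥ (u + t • v) =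
        ((1 / 2) * (u ⬝ᵥ K *ᵥ u) - P ⬝ᵥ u) + (v ⬝ᵥ K *ᵥ v / 2) * (t * t)
          + v ⬝ᵥ (K *ᵥ u - P) * t := by
    intro t
    simp only [mulVec_add, mulVec_smul, dotProduct_add, add_dotProduct, dotProduct_smul,
      smul_dotProduct, smul_eq_mul, dotProduct_sub]
    rw [hK.dotProduct_mulVec_comm u v, dotProduct_comm P v]
    ring
  have hquad : ∀ t : ℝ, 0 ≤ (v ⬝ᵥ K *ᵥ v / 2) * (t * t) + v ⬝ᵥ (K *ᵥ u - P) * t + 0 := by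
    intro t
    have := hmin (V.add_mem hu (V.smul_mem t hv))
    simp only [Set.mem_ofPred_eq, hexpand] at this
    linarith
  simpa [discrim] using discrim_le_zero hquad

theorem penalty_dotProduct_mulVec_le {ι κ : Type*} [Fintype ι] [Fintype κ] {K : Matrix ι ι ℝ}
    {G : Matrix κ ι ℝ} {ε : ℝ} (hε : 0 < ε) {w : ι → ℝ} {lam : κ → ℝ}
    (hw : (K + ε • (Gᵀ * G)) *ᵥ w = -(Gᵀ *ᵥ lam)) :
    w ⬝ᵥ K *ᵥ w ≤ lam ⬝ᵥ lam / (4 * ε) := by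
  set g := G *ᵥ w
  have henergy : w ⬝ᵥ K *ᵥ w + ε * (g ⬝ᵥ g) = -(g ⬝ᵥ lam) := by
    simpa only [add_mulVec, smul_mulVec, ← mulVec_mulVec, dotProduct_add, dotProduct_smul,
      dotProduct_neg, dotProduct_mulVec w Gᵀ, vecMul_transpose, smul_eq_mul] using
      congrArg (w ⬝ᵥ ·) hw
  -- AM-GM: `-(g ⬝ᵥ λ) ≤ ε (g ⬝ᵥ g) + (λ ⬝ᵥ λ) / (4ε)`
  have hsq : 0 ≤ ((2 * ε) • g + lam) ⬝ᵥ ((2 * ε) • g + lam) := by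
    simpa using dotProduct_star_self_nonneg ((2 * ε) • g + lam)
  simp only [dotProduct_add, add_dotProduct, dotProduct_smul, smul_dotProduct, smul_eq_mul,
    dotProduct_comm lam g] at hsq
  rw [le_div_iff₀ (by positivity)]
  nlinarith

theorem Matrix.PosDef.add_smul_transpose_mul_self {ι κ : Type*} [Fintype ι] [Fintype κ]
    {K : Matrix ι ι ℝ} (hK : K.PosDef) (G : Matrix κ ι ℝ) {ε : ℝ} (hε : 0 ≤ ε) :
    (K + ε • (Gᵀ * G)).PosDef := by
  refine hK.add_posSemidef (PosSemidef.smul ?_ hε)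
  simpa using posSemidef_conjTranspose_mul_self G

theorem penalty_solution_sub_mulVec_eq {ι κ : Type*} [Fintype ι] [DecidableEq ι] [Fintype κ]
    {K : Matrix ι ι ℝ} {G : Matrix κ ι ℝ} {ε : ℝ} (hM : IsUnit (K + ε • (Gᵀ * G)))
    {P u : ι → ℝ} {lam : κ → ℝ} (hu : G *ᵥ u = 0) (hlam : Gᵀ *ᵥ lam = K *ᵥ u - P) :
    (K + ε • (Gᵀ * G)) *ᵥ ((K + ε • (Gᵀ * G))⁻¹ *ᵥ P - u) = -(Gᵀ *ᵥ lam) := by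
  rw [mulVec_sub, mulVec_mulVec, mul_nonsing_inv _ ((isUnit_iff_isUnit_det _).mp hM), one_mulVec,
    add_mulVec, smul_mulVec, ← mulVec_mulVec, hu, mulVec_zero, smul_zero, add_zero, hlam, neg_sub]

theorem stmt_2_general (n m : ℕ)
    (K : Matrix (Fin n) (Fin n) ℝ) (hK : K.PosDef)
    (G : Matrix (Fin m) (Fin n) ℝ)
    (P : Fin n → ℝ) (C : (Fin n → ℝ) → ℝ)
    (hC : ∀ u, C u = (1 / 2) * (u ⬝ᵥ K.mulVec u) - P ⬝ᵥ u)
    (ustar : Fin n → ℝ) (hcon : G.mulVec ustar = 0)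
    (hmin : ∀ u : Fin n → ℝ, G.mulVec u = 0 → u ≠ ustar → C ustar < C u) :
    Tendsto (fun ε : ℝ => (K + ε • (Gᵀ * G))⁻¹.mulVec P) atTop (nhds ustar) := by
  have hKsymm : K.IsSymm := by simpa [IsHermitian, IsSymm] using hK.isHermitian
  have hminOn : IsMinOn (fun x => (1 / 2) * (x ⬝ᵥ K *ᵥ x) - P ⬝ᵥ x) (LinearMap.ker G.mulVecLin)
      ustar := by
    refine isMinOn_iff.mpr fun u hu => ?_
    rcases eq_or_ne u ustar with rfl | hne
    · exact le_rfl
    · simpa [hC] using (hmin u hu hne).le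
  obtain ⟨lam, hlam⟩ := G.exists_transpose_mulVec_eq_of_orthogonal_ker fun v hv =>
    hKsymm.dotProduct_mulVec_sub_eq_zero_of_isMinOn hcon hminOn hv
  obtain ⟨α, hα, hαK⟩ := hK.exists_pos_mul_sq_norm_le
  have hrate : Tendsto (fun ε : ℝ => √(lam ⬝ᵥ lam / (4 * α) / ε)) atTop (nhds 0) := by
    simpa [Function.comp_def] using (Real.continuous_sqrt.tendsto 0).comp
      (tendsto_const_nhds.div_atTop tendsto_id)
  rw [← tendsto_sub_nhds_zero_iff]
  refine squeeze_zero_norm' ?_ hrate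
  filter_upwards [eventually_gt_atTop 0] with ε hε
  have hw := penalty_solution_sub_mulVec_eq
    (hK.add_smul_transpose_mul_self G hε.le).isUnit hcon hlam
  refine Real.le_sqrt_of_sq_le ?_
  rw [div_div, le_div_iff₀ (by positivity)]
  have := (hαK _).trans (penalty_dotProduct_mulVec_le hε hw)
  rw [le_div_iff₀ (by positivity)] at this
  linarith

/-- Penalty method convergence: the minimizer `u_ε = (K + ε GᵀG)⁻¹P` of the penalized
functional converges, as `ε → ∞`, to the unique minimizer `u*` of
`C(u) = (1/2)uᵀKu - Pᵀu` subject to `Gu = 0`. -/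
theorem stmt_2 (n m : ℕ) (hmn : m ≤ n)
    (K : Matrix (Fin n) (Fin n) ℝ) (hK : K.PosDef)
    (G : Matrix (Fin m) (Fin n) ℝ) (hG : G.rank = m)
    (P : Fin n → ℝ) (C : (Fin n → ℝ) → ℝ)
    (hC : ∀ u, C u = (1 / 2) * (u ⬝ᵥ K.mulVec u) - P ⬝ᵥ u)
    (ustar : Fin n → ℝ) (hcon : G.mulVec ustar = 0)
    (hmin : ∀ u : Fin n → ℝ, G.mulVec u = 0 → u ≠ ustar → C ustar < C u) :
    Tendsto (fun ε : ℝ => (K + ε • (Gᵀ * G))⁻¹.mulVec P) atTop (nhds ustar) :=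
  stmt_2_general n m K hK G P C hC ustar hcon hmin
end

section
/- The constraint penalty ‖G u_ε‖ of the penalty-method minimizer u_ε = (K + ε GᵀG)⁻¹P satisfies ‖G u_ε‖ → 0 as ε → ∞; i.e., the penalty method asymptotically enforces the constraint g(u) = Gu = 0. -/
/-!
With `u = (K + ε GᵀG)⁻¹P` and `v = K⁻¹P`, the two normal equations give
`uᵀKu + ε ‖Gu‖² = uᵀP = uᵀKv`, and positivity of `K` at `2u - v` gives
`4 (uᵀKv - uᵀKu) ≤ vᵀKv = PᵀK⁻¹P`. Hence `4 ε ‖Gu‖² ≤ PᵀK⁻¹P` for every `ε ≥ 0`,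
so `‖G u_ε‖ = O(ε^(-1/2))`.
-/

open Matrix Filter

namespace Matrix

variable {ι κ : Type*} [Fintype ι] [Fintype κ]

lemma PosSemidef.four_mul_dotProduct_mulVec_sub_le {K : Matrix ι ι ℝ} (hK : K.PosSemidef)
    (x y : ι → ℝ) : 4 * (x ⬝ᵥ K *ᵥ y - x ⬝ᵥ K *ᵥ x) ≤ y ⬝ᵥ K *ᵥ y := by
  have hKt : Kᵀ = K := by simpa [IsHermitian] using hK.isHermitian
  have hsymm : y ⬝ᵥ K *ᵥ x = x ⬝ᵥ K *ᵥ y := by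
    rw [dotProduct_mulVec, dotProduct_comm, ← mulVec_transpose, hKt]
  have := hK.dotProduct_mulVec_nonneg ((2 : ℝ) • x - y)
  simp only [star_trivial, mulVec_sub, mulVec_smul, sub_dotProduct, dotProduct_sub,
    smul_dotProduct, dotProduct_smul, smul_eq_mul, hsymm] at this
  linarith

lemma norm_sq_le_dotProduct_self (w : κ → ℝ) : ‖w‖ ^ 2 ≤ w ⬝ᵥ w := by
  have hcoord (i : κ) : w i ^ 2 ≤ w ⬝ᵥ w := by
    simpa [dotProduct, sq] using
      Finset.single_le_sum (fun j _ => mul_self_nonneg (w j)) (Finset.mem_univ i)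
  have : ‖w‖ ≤ √(w ⬝ᵥ w) :=
    (pi_norm_le_iff_of_nonneg (Real.sqrt_nonneg _)).2 fun i => Real.abs_le_sqrt (hcoord i)
  exact (Real.le_sqrt (norm_nonneg w) (by simpa using dotProduct_star_self_nonneg w)).1 this

theorem PosDef.four_mul_norm_sq_penalty_violation_le [DecidableEq ι] {K : Matrix ι ι ℝ}
    (hK : K.PosDef) (G : Matrix κ ι ℝ) (P : ι → ℝ) {ε : ℝ} (hε : 0 ≤ ε) :
    4 * ε * ‖G *ᵥ (K + ε • (Gᵀ * G))⁻¹ *ᵥ P‖ ^ 2 ≤ P ⬝ᵥ K⁻¹ *ᵥ P := by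
  set A := K + ε • (Gᵀ * G)
  set u := A⁻¹ *ᵥ P
  set v := K⁻¹ *ᵥ P
  have hGG : (Gᵀ * G).PosSemidef := by
    simpa using posSemidef_conjTranspose_mul_self G
  have hA : A.PosDef := hK.add_posSemidef (hGG.smul hε)
  have solve {B : Matrix ι ι ℝ} (hB : B.PosDef) : B *ᵥ B⁻¹ *ᵥ P = P := by
    rw [mulVec_mulVec, mul_nonsing_inv _ ((isUnit_iff_isUnit_det B).1 hB.isUnit), one_mulVec]
  have hAu : A *ᵥ u = P := solve hA
  have hKv : K *ᵥ v = P := solve hK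
  have hsplit : u ⬝ᵥ P = u ⬝ᵥ K *ᵥ u + ε * ((G *ᵥ u) ⬝ᵥ (G *ᵥ u)) := by
    rw [← hAu, add_mulVec, dotProduct_add, smul_mulVec, dotProduct_smul, smul_eq_mul,
      ← mulVec_mulVec, dotProduct_mulVec u Gᵀ, vecMul_transpose]
  have hquad := hK.posSemidef.four_mul_dotProduct_mulVec_sub_le u v
  rw [hKv, dotProduct_comm v] at hquad
  nlinarith [norm_sq_le_dotProduct_self (G *ᵥ u)]

end Matrix

/-- The constraint violation `‖G u_ε‖` of the penalty-method minimizer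
`u_ε = (K + ε GᵀG)⁻¹P` tends to `0` as `ε → ∞`. -/
theorem stmt_4 (n m : ℕ) (K : Matrix (Fin n) (Fin n) ℝ) (hK : K.PosDef)
    (G : Matrix (Fin m) (Fin n) ℝ) (P : Fin n → ℝ) :
    Tendsto (fun ε : ℝ => ‖G.mulVec ((K + ε • (Gᵀ * G))⁻¹.mulVec P)‖)
      atTop (nhds 0) := by
  set Q := P ⬝ᵥ K⁻¹ *ᵥ P
  have hbound : ∀ᶠ ε in atTop, ‖G *ᵥ (K + ε • (Gᵀ * G))⁻¹ *ᵥ P‖ ≤ √(Q / (4 * ε)) := by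
    filter_upwards [eventually_gt_atTop 0] with ε hε
    refine Real.le_sqrt_of_sq_le ?_
    rw [le_div_iff₀' (by positivity)]
    exact hK.four_mul_norm_sq_penalty_violation_le G P hε.le
  have hlim : Tendsto (fun ε : ℝ => √(Q / (4 * ε))) atTop (nhds 0) := by
    simpa using (tendsto_const_nhds.div_atTop (tendsto_id.const_mul_atTop four_pos)).sqrt
  exact squeeze_zero' (.of_forall fun _ => norm_nonneg _) hbound hlim
end

section
/- Augmented Lagrangian multiplier update convergence: define u^k as the minimizer of L(u, λ^k) = (1/2)uᵀKu - Pᵀu + (λ^k)ᵀGu + (ε/2)‖Gu‖² and λ^{k+1} = λ^k + ε G u^k. If K is symmetric positive definite, G has full row rank, and ε > 0, then λ^k converges to the exact Lagrange multiplier λ* and u^k converges to the constrained minimizer u*, for any initial λ⁰. -/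
/-!
Stationarity of `u^k` for the augmented Lagrangian reads `K u^k + Gᵀ λ^{k+1} = P`. Subtracting
the saddle-point system and eliminating `u^k - u*` shows that the multiplier error
`e_k = λ^k - λ*` obeys `(I + T) e_{k+1} = e_k` with `T = ε G K⁻¹ Gᵀ`, which is positive definite
because `G` has full row rank. For a positive operator `T` this recurrence gives
`‖e_k‖² ≥ ‖e_{k+1}‖² + ‖T e_{k+1}‖²`, so `‖e_k‖²` decreases to a limit and `T e_k → 0`;
invertibility of `T` gives `e_k → 0`, and then `u^k = K⁻¹ (P - Gᵀ λ^{k+1}) → u*`.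
-/

open Matrix Filter Topology

theorem LinearMap.IsPositive.tendsto_apply_of_add_apply_eq {E : Type*} [NormedAddCommGroup E]
    [InnerProductSpace ℝ E] {S : E →ₗ[ℝ] E} (hS : S.IsPositive) {x : ℕ → E}
    (hx : ∀ k, x (k + 1) + S (x (k + 1)) = x k) :
    Tendsto (fun k => S (x k)) atTop (𝓝 0) := by
  have hstep : ∀ k, ‖x (k + 1)‖ ^ 2 + ‖S (x (k + 1))‖ ^ 2 ≤ ‖x k‖ ^ 2 := by
    intro k
    rw [← hx k, norm_add_sq_real]
    nlinarith [hS.inner_nonneg_right (x (k + 1))]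
  have hanti : Antitone fun k => ‖x k‖ ^ 2 :=
    antitone_nat_of_succ_le fun k => by nlinarith [hstep k, sq_nonneg ‖S (x (k + 1))‖]
  have hconv : Tendsto (fun k => ‖x k‖ ^ 2) atTop (𝓝 (⨅ k, ‖x k‖ ^ 2)) :=
    tendsto_atTop_ciInf hanti ⟨0, by rintro _ ⟨k, rfl⟩; positivity⟩
  have hdiff : Tendsto (fun k => ‖x k‖ ^ 2 - ‖x (k + 1)‖ ^ 2) atTop (𝓝 0) := by
    simpa using hconv.sub (hconv.comp (tendsto_add_atTop_nat 1))
  have hsq : Tendsto (fun k => ‖S (x (k + 1))‖ ^ 2) atTop (𝓝 0) :=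
    squeeze_zero (fun k => by positivity) (fun k => by linarith [hstep k]) hdiff
  rw [← tendsto_add_atTop_iff_nat 1, tendsto_zero_iff_norm_tendsto_zero]
  simpa using hsq.sqrt

namespace Matrix

variable {ι κ : Type*} [Fintype ι] [Fintype κ]

theorem PosDef.tendsto_zero_of_add_mulVec_eq [DecidableEq ι] {T : Matrix ι ι ℝ} (hT : T.PosDef)
    {x : ℕ → ι → ℝ} (hx : ∀ k, x (k + 1) + T *ᵥ x (k + 1) = x k) :
    Tendsto x atTop (𝓝 0) := by
  have hTx : Tendsto (fun k => T *ᵥ x k) atTop (𝓝 0) := by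
    have h := (isPositive_toEuclideanLin_iff.mpr hT.posSemidef).tendsto_apply_of_add_apply_eq
      (x := fun k => WithLp.toLp 2 (x k)) fun k => by
        rw [toEuclideanLin, toLpLin_toLp, ← WithLp.toLp_add, toLin'_apply, hx k]
    simpa [Function.comp_def, toEuclideanLin, toLpLin_toLp] using
      ((PiLp.continuous_ofLp 2 _).tendsto 0).comp h
  have hinv : ∀ k, T⁻¹ *ᵥ (T *ᵥ x k) = x k := fun k => by
    rw [mulVec_mulVec, nonsing_inv_mul _ (T.isUnit_iff_isUnit_det.mp hT.isUnit), one_mulVec]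
  simpa [Function.comp_def, hinv] using
    ((continuous_const (y := T⁻¹).matrix_mulVec continuous_id).tendsto 0).comp hTx

theorem IsSymm.mulVec_eq_of_forall_le {A : Matrix ι ι ℝ} (hA : A.IsSymm) {b u : ι → ℝ}
    (hmin : ∀ v, 1 / 2 * (u ⬝ᵥ A *ᵥ u) - b ⬝ᵥ u ≤ 1 / 2 * (v ⬝ᵥ A *ᵥ v) - b ⬝ᵥ v) :
    A *ᵥ u = b := by
  set w := A *ᵥ u - b
  -- the increment of the quadratic along `u + t • w` is `(w ⬝ᵥ w) t + (w ⬝ᵥ A *ᵥ w) t² / 2`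
  have hquad : ∀ t : ℝ, 0 ≤ 1 / 2 * (w ⬝ᵥ A *ᵥ w) * (t * t) + (w ⬝ᵥ w) * t + 0 := by
    intro t
    have h := hmin (u + t • w)
    have hw : w ⬝ᵥ w = w ⬝ᵥ A *ᵥ u - w ⬝ᵥ b := dotProduct_sub _ _ _
    have hsymm : u ⬝ᵥ A *ᵥ w = w ⬝ᵥ A *ᵥ u := by
      simpa only [hA.eq] using dotProduct_transpose_mulVec A u w
    simp only [mulVec_add, mulVec_smul, dotProduct_add, add_dotProduct, dotProduct_smul,
      smul_dotProduct, smul_eq_mul, hsymm, dotProduct_comm b w] at h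
    rw [hw]
    linarith
  have hdisc : (w ⬝ᵥ w) ^ 2 ≤ 0 := by simpa [discrim] using discrim_le_zero hquad
  exact sub_eq_zero.mp <| dotProduct_self_eq_zero.mp <|
    pow_eq_zero_iff two_ne_zero |>.mp <| le_antisymm hdisc (sq_nonneg _)

theorem vecMul_injective_of_rank_eq_card {R : Type*} [Field R] {A : Matrix κ ι R}
    (hA : A.rank = Fintype.card κ) :
    Function.Injective A.vecMul := by
  rw [vecMul_injective_iff, linearIndependent_iff_card_eq_finrank_span, Set.finrank,
    ← rank_eq_finrank_span_row, hA]

variable [DecidableEq ι] {K : Matrix ι ι ℝ} {G : Matrix κ ι ℝ} {P u u' : ι → ℝ} {μ μ' : κ → ℝ}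

theorem eq_inv_mulVec_of_mulVec_add_eq (hK : IsUnit K.det) (h : K *ᵥ u + Gᵀ *ᵥ μ = P) :
    u = K⁻¹ *ᵥ (P - Gᵀ *ᵥ μ) := by
  rw [← h, add_sub_cancel_right, mulVec_mulVec, nonsing_inv_mul _ hK, one_mulVec]

theorem mulVec_eq_mul_inv_mul_transpose_mulVec_sub (hK : IsUnit K.det)
    (h : K *ᵥ u + Gᵀ *ᵥ μ = P) (h' : K *ᵥ u' + Gᵀ *ᵥ μ' = P) (hu' : G *ᵥ u' = 0) :
    G *ᵥ u = (G * K⁻¹ * Gᵀ) *ᵥ (μ' - μ) := by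
  rw [← sub_zero (G *ᵥ u), ← hu', ← mulVec_sub, eq_inv_mulVec_of_mulVec_add_eq hK h,
    eq_inv_mulVec_of_mulVec_add_eq hK h', ← mulVec_sub, sub_sub_sub_cancel_left, ← mulVec_sub]
  simp only [mulVec_mulVec, Matrix.mul_assoc]

end Matrix

section AugmentedLagrangian

variable {ι κ : Type*} [Fintype ι] [Fintype κ]

noncomputable def augmentedLagrangian (K : Matrix ι ι ℝ) (G : Matrix κ ι ℝ) (P : ι → ℝ) (ε : ℝ)
    (u : ι → ℝ) (μ : κ → ℝ) : ℝ :=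
  1 / 2 * (u ⬝ᵥ K *ᵥ u) - P ⬝ᵥ u + μ ⬝ᵥ G *ᵥ u + ε / 2 * (G *ᵥ u ⬝ᵥ G *ᵥ u)

theorem augmentedLagrangian_eq (K : Matrix ι ι ℝ) (G : Matrix κ ι ℝ) (P : ι → ℝ) (ε : ℝ)
    (u : ι → ℝ) (μ : κ → ℝ) :
    augmentedLagrangian K G P ε u μ =
      1 / 2 * (u ⬝ᵥ (K + ε • (Gᵀ * G)) *ᵥ u) - (P - Gᵀ *ᵥ μ) ⬝ᵥ u := by
  rw [augmentedLagrangian, add_mulVec, smul_mulVec, ← mulVec_mulVec, dotProduct_add,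
    dotProduct_smul, smul_eq_mul, dotProduct_transpose_mulVec, sub_dotProduct,
    dotProduct_comm (Gᵀ *ᵥ μ), dotProduct_transpose_mulVec]
  ring

theorem Matrix.IsSymm.mulVec_add_transpose_mulVec_eq_of_forall_augmentedLagrangian_le
    {K : Matrix ι ι ℝ} (hK : K.IsSymm) {G : Matrix κ ι ℝ} {P u : ι → ℝ} {ε : ℝ} {μ : κ → ℝ}
    (hmin : ∀ v, augmentedLagrangian K G P ε u μ ≤ augmentedLagrangian K G P ε v μ) :
    K *ᵥ u + Gᵀ *ᵥ (μ + ε • G *ᵥ u) = P := by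
  have hGG : (Gᵀ * G).IsSymm := by rw [IsSymm, transpose_mul, transpose_transpose]
  have hA : (K + ε • (Gᵀ * G)).IsSymm := hK.add (hGG.smul ε)
  have h := hA.mulVec_eq_of_forall_le fun v => by simpa only [augmentedLagrangian_eq] using hmin v
  rw [add_mulVec, smul_mulVec, ← mulVec_mulVec, eq_sub_iff_add_eq] at h
  rw [mulVec_add, mulVec_smul, ← h]
  abel

end AugmentedLagrangian

/-- Augmented Lagrangian convergence: with `u^k` the minimizer of
`L(u,λ^k) = (1/2)uᵀKu - Pᵀu + (λ^k)ᵀGu + (ε/2)‖Gu‖²` and the update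
`λ^{k+1} = λ^k + ε G u^k`, if `K` is symmetric positive definite, `G` has full row rank
and `ε > 0`, then `λ^k → λ*` and `u^k → u*`, the unique solution of the saddle system,
for any initial `λ⁰`. -/
theorem stmt_7 (n m : ℕ) (K : Matrix (Fin n) (Fin n) ℝ) (hK : K.PosDef)
    (G : Matrix (Fin m) (Fin n) ℝ) (hG : G.rank = m)
    (P : Fin n → ℝ) (ε : ℝ) (hε : 0 < ε)
    (L : (Fin n → ℝ) → (Fin m → ℝ) → ℝ)
    (hL : ∀ u lam, L u lam = (1 / 2) * (u ⬝ᵥ K.mulVec u) - P ⬝ᵥ u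
      + lam ⬝ᵥ G.mulVec u + (ε / 2) * (G.mulVec u ⬝ᵥ G.mulVec u))
    (u : ℕ → Fin n → ℝ) (lam : ℕ → Fin m → ℝ)
    (hmin : ∀ k, ∀ v : Fin n → ℝ, L (u k) (lam k) ≤ L v (lam k))
    (hupd : ∀ k, lam (k + 1) = lam k + ε • G.mulVec (u k))
    (ustar : Fin n → ℝ) (lamstar : Fin m → ℝ)
    (hsys₁ : K.mulVec ustar + Gᵀ.mulVec lamstar = P)
    (hsys₂ : G.mulVec ustar = 0) :
    Tendsto lam atTop (nhds lamstar) ∧ Tendsto u atTop (nhds ustar) := by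
  obtain rfl : L = augmentedLagrangian K G P ε := funext₂ hL
  have hKdet : IsUnit K.det := K.isUnit_iff_isUnit_det.mp hK.isUnit
  have hstat (k : ℕ) : K *ᵥ u k + Gᵀ *ᵥ lam (k + 1) = P := by
    rw [hupd]
    exact (isHermitian_iff_isSymm.mp hK.isHermitian
      ).mulVec_add_transpose_mulVec_eq_of_forall_augmentedLagrangian_le (hmin k)
  set T := ε • (G * K⁻¹ * Gᵀ)
  have hT : T.PosDef := by
    refine PosDef.smul ?_ hε
    simpa only [conjTranspose_eq_transpose_of_trivial] using hK.inv.mul_mul_conjTranspose_same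
      (vecMul_injective_of_rank_eq_card (hG.trans (Fintype.card_fin m).symm))
  have hrec (k : ℕ) :
      lam (k + 1) - lamstar + T *ᵥ (lam (k + 1) - lamstar) = lam k - lamstar := by
    have hGu := mulVec_eq_mul_inv_mul_transpose_mulVec_sub hKdet (hstat k) hsys₁ hsys₂
    rw [smul_mulVec, ← neg_sub lamstar, mulVec_neg, ← hGu, hupd]
    module
  have hlam : Tendsto lam atTop (𝓝 lamstar) :=
    tendsto_sub_nhds_zero_iff.mp (hT.tendsto_zero_of_add_mulVec_eq hrec)
  refine ⟨hlam, ?_⟩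
  rw [funext fun k => eq_inv_mulVec_of_mulVec_add_eq hKdet (hstat k),
    eq_inv_mulVec_of_mulVec_add_eq hKdet hsys₁]
  have hcont : Continuous fun μ => K⁻¹ *ᵥ (P - Gᵀ *ᵥ μ) := continuous_const.matrix_mulVec
    (continuous_const.sub (continuous_const.matrix_mulVec continuous_id))
  exact (hcont.tendsto lamstar).comp (hlam.comp (tendsto_add_atTop_nat 1))
end
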